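/- Let λ = (λ₁,λ₂) be a partition of n with two rows and T ∈ IGLT(λ)_m. The shape of Φ_{λ;m}(T) is (λ₁-k, λ₂-k, 1^k) (where k = n-m) if and only if the entry T(2, λ₂) in the last box of the second row occurs exactly once in T; otherwise the shape is (λ₁-k, λ₂-k+1, 1^{k-1}). -/

import Mathlib

/-- A two-row tableau, given by its two rows (lists of entries). -/
structure TwoRowT where
  r1 : List ℕ
  r2 : List ℕ
deriving DecidableEq

/-- A "hook-plus" tableau: two rows together with the part of the first
column lying below the second row. -/
structure HookT where
  r1 : List ℕ
  r2 : List ℕ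
  col : List ℕ
deriving DecidableEq

/-- `T` is an increasing gapless tableau of shape `(l1,l2)` with maximum entry `m`. -/
def IsIGLT (l1 l2 m : ℕ) (T : TwoRowT) : Prop :=
  T.r1.length = l1 ∧ T.r2.length = l2 ∧
  T.r1.Chain' (· < ·) ∧ T.r2.Chain' (· < ·) ∧
  (∀ j, j < l2 → T.r1.getD j 0 < T.r2.getD j 0) ∧
  (∀ x ∈ T.r1, 1 ≤ x ∧ x ≤ m) ∧ (∀ x ∈ T.r2, 1 ≤ x ∧ x ≤ m) ∧
  (∀ k, 1 ≤ k → k ≤ m → k ∈ T.r1 ∨ k ∈ T.r2) ∧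
  (m ∈ T.r1 ∨ m ∈ T.r2)

/-- The set `A` of repeated entries of a two-row increasing tableau. -/
def setA (T : TwoRowT) : List ℕ := T.r1.filter (fun x => x ∈ T.r2)

/-- The set `B`: entries of the second row immediately to the right of an element of `A`. -/
def setB (T : TwoRowT) : List ℕ :=
  (T.r2.zip T.r2.tail).filterMap (fun p => if p.1 ∈ setA T then some p.2 else none)

/-- Pechenik's map `Φ_{λ;m}`. -/
def Phi (T : TwoRowT) : HookT :=
  ⟨T.r1.filter (fun x => x ∉ setA T),
   T.r2.filter (fun x => x ∉ setB T),
   List.insertionSort (· ≤ ·) (setB T)⟩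

/-- The shape of a hook-plus tableau, as a list. -/
def shapeOf (S : HookT) : List ℕ :=
  S.r1.length :: S.r2.length :: List.replicate S.col.length 1

/-- `S` is a standard Young tableau with entries `1,...,m`. -/
def IsSYTHook (m : ℕ) (S : HookT) : Prop :=
  S.r1.Chain' (· < ·) ∧ S.r2.Chain' (· < ·) ∧
  ((S.r1.take 1) ++ (S.r2.take 1) ++ S.col).Chain' (· < ·) ∧
  (∀ j, j < S.r2.length → S.r1.getD j 0 < S.r2.getD j 0) ∧
  S.r2.length ≤ S.r1.length ∧
  (S.col ≠ [] → S.r2 ≠ []) ∧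
  (S.r1 ++ S.r2 ++ S.col).Perm (List.range' 1 m)

/-- The shape `λ_m^{(1)} = (λ₁-k, λ₂-k, 1^k)`. -/
def lamShape1 (l1 l2 k : ℕ) : List ℕ := [l1 - k, l2 - k] ++ List.replicate k 1

/-- The shape `λ_m^{(2)} = (λ₁-k, λ₂-k+1, 1^(k-1))`. -/
def lamShape2 (l1 l2 k : ℕ) : List ℕ := [l1 - k, l2 - k + 1] ++ List.replicate (k - 1) 1

/-- The set `Par(λ;m)` of shapes occurring in Pechenik's expansion. -/
def ParSet (l1 l2 n m : ℕ) : Set (List ℕ) :=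
  {s | (n - m + 1 < l2 ∨ m = n) ∧ s = lamShape1 l1 l2 (n - m)} ∪
  {s | l1 ≠ l2 ∧ m < n ∧ n - m < l2 ∧ s = lamShape2 l1 l2 (n - m)}

/-- Row index (1-based) of the entry `x` in a hook-plus tableau. -/
def rowIdx (S : HookT) (x : ℕ) : ℕ :=
  if x ∈ S.r1 then 1 else if x ∈ S.r2 then 2 else 3 + S.col.idxOf x

/-- Column index (0-based) of the entry `x` in a hook-plus tableau. -/
def colIdx (S : HookT) (x : ℕ) : ℕ :=
  if x ∈ S.r1 then S.r1.idxOf x else if x ∈ S.r2 then S.r2.idxOf x else 0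

/-- Descent set of an increasing gapless two-row tableau with max entry `m`. -/
def desT (m : ℕ) (T : TwoRowT) : Finset ℕ :=
  (Finset.Ioo 0 m).filter (fun i => i ∈ T.r1 ∧ i + 1 ∈ T.r2)

/-- Descent set of a standard Young tableau with entries `1,...,m`. -/
def desS (m : ℕ) (S : HookT) : Finset ℕ :=
  (Finset.Ioo 0 m).filter (fun i => rowIdx S i < rowIdx S (i + 1))

def swapVal (i j x : ℕ) : ℕ := if x = i then j else if x = j then i else x

/-- Swap the entries `i` and `j` in a two-row tableau. -/
def twoRowSwap (i j : ℕ) (T : TwoRowT) : TwoRowT :=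
  ⟨T.r1.map (swapVal i j), T.r2.map (swapVal i j)⟩

/-- Swap the entries `i` and `j` in a hook-plus tableau. -/
def hookSwap (i j : ℕ) (S : HookT) : HookT :=
  ⟨S.r1.map (swapVal i j), S.r2.map (swapVal i j), S.col.map (swapVal i j)⟩

/-- Searles' 0-Hecke operator `π_i` on a standard Young tableau:
`some S` means the result is `S`, `none` means the result is `0`. -/
def searlesStep (i : ℕ) (S : HookT) : Option HookT :=
  if colIdx S i < colIdx S (i + 1) then some S
  else if colIdx S i = colIdx S (i + 1) then none
  else some (hookSwap i (i + 1) S)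

/-- Kim–Yoo's 0-Hecke operator `π_i` on an increasing gapless tableau. -/
def kyStep (i : ℕ) (T : TwoRowT) : Option TwoRowT :=
  if i ∈ T.r1 ∧ i + 1 ∈ T.r2 then
    if i ∉ T.r2 ∧ i + 1 ∉ T.r1 ∧ T.r2.idxOf (i + 1) < T.r1.idxOf i then
      some (twoRowSwap i (i + 1) T)
    else none
  else some T

/-- Searles' operator, extended linearly. -/
noncomputable def piOp (i : ℕ) : (HookT →₀ ℂ) →ₗ[ℂ] (HookT →₀ ℂ) :=
  Finsupp.lsum ℂ fun S => (searlesStep i S).elim 0 fun S' => Finsupp.lsingle S'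

/-- Kim–Yoo's operator, extended linearly. -/
noncomputable def kyOp (i : ℕ) : (TwoRowT →₀ ℂ) →ₗ[ℂ] (TwoRowT →₀ ℂ) :=
  Finsupp.lsum ℂ fun T => (kyStep i T).elim 0 fun T' => Finsupp.lsingle T'

/-- The data of the boxes occupied by repeated entries: for each repeated entry `i`,
the pair of (0-based) columns of its occurrence in row 1 and in row 2.
For two-row shapes this datum determines the pair `(Γ_i(T), T⁻¹(i))`. -/
def repPairs (T : TwoRowT) : Set (ℕ × ℕ) :=
  {p | ∃ i, i ∈ T.r1 ∧ i ∈ T.r2 ∧ p = (T.r1.idxOf i, T.r2.idxOf i)}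

/-- The Kim–Yoo equivalence `∼_{λ;m}` on two-row increasing gapless tableaux. -/
def equivKY (T1 T2 : TwoRowT) : Prop := repPairs T1 = repPairs T2

/-- The equivalence class of `T` in `IGLT(λ)_m` under `∼_{λ;m}`. -/
def classOf (l1 l2 m : ℕ) (T : TwoRowT) : Set TwoRowT :=
  {T' | IsIGLT l1 l2 m T' ∧ equivKY T T'}

/-- The columns (0-based) of the bottommost boxes of the repeated entries,
listed in increasing order of the repeated entries. -/
def botCols (T : TwoRowT) : List ℕ :=
  (T.r1.filter (fun x => x ∈ T.r2)).map (fun i => T.r2.idxOf i)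

/-- The partial order `⪯` on equivalence classes. -/
def classLE (C1 C2 : Set TwoRowT) : Prop :=
  ∃ T1 ∈ C1, ∃ T2 ∈ C2, List.Forall₂ (· ≤ ·) (botCols T1) (botCols T2)

open Classical in
/-- The fundamental quasisymmetric function `F_{comp(D)}` of degree `m`,
as a formal power series in the variables `x_0, x_1, x_2, ...`. -/
noncomputable def Fqs (m : ℕ) (D : Finset ℕ) : MvPowerSeries ℕ ℚ :=
  fun e =>
    if ∃ f : Fin m → ℕ, Monotone f ∧
        (∀ j : ℕ, ∀ hj : j < m, 0 < j → j ∈ D → f ⟨j - 1, by omega⟩ < f ⟨j, hj⟩) ∧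
        (∀ i : ℕ, e i = Nat.card {j : Fin m // f j = i})
    then 1 else 0

/-- The Schur function `s_μ = Σ_{S ∈ SYT(μ)} F_{comp(Des(S))}` (for shapes
representable as hook-plus tableaux). -/
noncomputable def schurF (m : ℕ) (μ : List ℕ) : MvPowerSeries ℕ ℚ :=
  ∑ᶠ S ∈ {S : HookT | IsSYTHook m S ∧ shapeOf S = μ}, Fqs m (desS m S)

lemma aux_nodup_of_chain'_lt {l : List ℕ} (h : l.Chain' (· < ·)) : l.Nodup :=
  (List.isChain_iff_pairwise.mp h).imp ne_of_lt

lemma aux_map_fst_zip_tail : ∀ l : List ℕ, (l.zip l.tail).map Prod.fst = l.dropLast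
  | [] => rfl
  | [_] => rfl
  | a :: b :: t => by
    have := aux_map_fst_zip_tail (b :: t)
    simp only [List.tail_cons] at this ⊢
    rw [List.zip_cons_cons, List.map_cons, this]
    rfl

lemma aux_filterMap_if (P : ℕ → Prop) [DecidablePred P] :
    ∀ l : List (ℕ × ℕ),
      l.filterMap (fun p => if P p.1 then some p.2 else none)
        = (l.filter (fun p => P p.1)).map Prod.snd
  | [] => rfl
  | p :: t => by
    rw [List.filterMap_cons, List.filter_cons, aux_filterMap_if P t]
    by_cases h : P p.1 <;> simp [h]

lemma aux_length_filter_mem {l : List ℕ} (b : List ℕ) (hl : l.Nodup) :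
    (l.filter (fun x => x ∈ b)).length = (l.toFinset ∩ b.toFinset).card := by
  rw [← List.toFinset_card_of_nodup (hl.filter _)]
  congr 1
  ext x
  simp [List.mem_filter, Finset.mem_inter, and_comm]

/-- For `T ∈ IGLT(λ)_m` with `λ = (λ₁,λ₂)` and `k = n - m`: the shape of `Φ_{λ;m}(T)`
is `(λ₁-k, λ₂-k, 1^k)` if and only if the entry `T(2,λ₂)` in the last box of the second
row occurs exactly once in `T`; otherwise the shape is `(λ₁-k, λ₂-k+1, 1^(k-1))`. -/
theorem stmt_8 (l1 l2 n m : ℕ) (h2 : 1 ≤ l2) (h12 : l2 ≤ l1) (hn : n = l1 + l2)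
    (hm1 : max l1 (l2 + 1) ≤ m) (hm2 : m ≤ n)
    (T : TwoRowT) (hT : IsIGLT l1 l2 m T) :
    (shapeOf (Phi T) = lamShape1 l1 l2 (n - m) ↔ T.r2.getD (l2 - 1) 0 ∉ T.r1) ∧
    (T.r2.getD (l2 - 1) 0 ∈ T.r1 → shapeOf (Phi T) = lamShape2 l1 l2 (n - m)) := by
  obtain ⟨hlen1, hlen2, hc1, hc2, hcol, hb1, hb2, hcov, hmm⟩ := hT
  set k := n - m with hk
  have nd1 : T.r1.Nodup := aux_nodup_of_chain'_lt hc1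
  have nd2 : T.r2.Nodup := aux_nodup_of_chain'_lt hc2
  -- cardinality of the intersection
  have hUnion : T.r1.toFinset ∪ T.r2.toFinset = Finset.Icc 1 m := by
    ext x
    simp only [Finset.mem_union, List.mem_toFinset, Finset.mem_Icc]
    constructor
    · rintro (h | h)
      · exact hb1 x h
      · exact hb2 x h
    · rintro ⟨ha, hbb⟩
      exact hcov x ha hbb
  have hcard1 : T.r1.toFinset.card = l1 := by
    rw [List.toFinset_card_of_nodup nd1, hlen1]
  have hcard2 : T.r2.toFinset.card = l2 := by
    rw [List.toFinset_card_of_nodup nd2, hlen2]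
  have hcardI : (T.r1.toFinset ∩ T.r2.toFinset).card = k := by
    have h := Finset.card_union_add_card_inter T.r1.toFinset T.r2.toFinset
    rw [hUnion, hcard1, hcard2, Nat.card_Icc] at h
    omega
  have hAfin : (setA T).toFinset = T.r1.toFinset ∩ T.r2.toFinset := by
    ext x
    simp [setA, List.mem_filter]
  have hAlen : (setA T).length = k := by
    rw [setA, aux_length_filter_mem _ nd1, hcardI]
  have hkl2 : k ≤ l2 := by
    have h : (T.r1.toFinset ∩ T.r2.toFinset).card ≤ T.r2.toFinset.card :=
      Finset.card_le_card Finset.inter_subset_right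
    rw [hcardI, hcard2] at h
    exact h
  -- setB facts
  have hBeq : setB T = ((T.r2.zip T.r2.tail).filter
      (fun p => decide (p.1 ∈ setA T))).map Prod.snd := by
    rw [setB, aux_filterMap_if (fun x => x ∈ setA T)]
  have hBsub : (setB T).Sublist T.r2 := by
    rw [hBeq]
    refine List.Sublist.trans ?_ (List.tail_sublist T.r2)
    have hmz : (T.r2.zip T.r2.tail).map Prod.snd = T.r2.tail :=
      List.map_snd_zip (by simp [List.length_tail])
    have h := (List.filter_sublist (p := fun p : ℕ × ℕ => decide (p.1 ∈ setA T))
      (l := T.r2.zip T.r2.tail)).map Prod.snd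
    rwa [hmz] at h
  have ndB : (setB T).Nodup := nd2.sublist hBsub
  have hBlen : (setB T).length
      = T.r2.dropLast.countP (fun x => decide (x ∈ setA T)) := by
    rw [hBeq, List.length_map, ← List.countP_eq_length_filter,
      ← aux_map_fst_zip_tail T.r2, List.countP_map]
    rfl
  -- the last entry
  have hne : T.r2 ≠ [] := by
    intro h
    rw [h] at hlen2
    simp at hlen2
    omega
  have hidx : l2 - 1 < T.r2.length := by omega
  have hlastget : T.r2.getD (l2 - 1) 0 = T.r2.getLast hne := by
    rw [List.getD_eq_getElem _ _ hidx, List.getLast_eq_getElem]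
    congr 1
    omega
  set lastv := T.r2.getD (l2 - 1) 0 with hlv
  have hlastmem : lastv ∈ T.r2 := by
    rw [hlastget]; exact List.getLast_mem hne
  have hsplit : T.r2.dropLast ++ [lastv] = T.r2 := by
    rw [hlastget]; exact List.dropLast_append_getLast hne
  have hcount2 : T.r2.countP (fun x => decide (x ∈ setA T)) = k := by
    rw [List.countP_eq_length_filter]
    have : (T.r2.filter (fun x => decide (x ∈ setA T))).length
        = (T.r2.toFinset ∩ (setA T).toFinset).card :=
      aux_length_filter_mem (setA T) nd2
    rw [this, hAfin, Finset.inter_comm, Finset.inter_assoc, Finset.inter_self, hcardI]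
  have hdropc : T.r2.dropLast.countP (fun x => decide (x ∈ setA T))
      + (if lastv ∈ setA T then 1 else 0) = k := by
    rw [← hsplit, List.countP_append] at hcount2
    simpa [List.countP_singleton] using hcount2
  -- lengths of the rows of Phi T
  have hrow1 : (T.r1.filter (fun x => ¬ x ∈ setA T)).length = l1 - k := by
    have hsame : T.r1.filter (fun x => decide (x ∈ setA T))
        = T.r1.filter (fun x => decide (x ∈ T.r2)) := by
      refine List.filter_congr ?_
      intro x hx
      simp [setA, List.mem_filter, hx]
    have hlenA : (T.r1.filter (fun x => decide (x ∈ setA T))).length = k := by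
      rw [hsame, aux_length_filter_mem _ nd1, hcardI]
    have h := List.length_eq_length_filter_add (l := T.r1)
      (fun x => decide (x ∈ setA T))
    have hnegf : (T.r1.filter (fun x => !decide (x ∈ setA T)))
        = T.r1.filter (fun x => ¬ x ∈ setA T) := by
      refine List.filter_congr ?_
      intro x _
      simp
    rw [hnegf, hlenA, hlen1] at h
    omega
  have hBmemlen : (T.r2.filter (fun x => decide (x ∈ setB T))).length
      = (setB T).length := by
    rw [aux_length_filter_mem _ nd2]
    have hBss : (setB T).toFinset ⊆ T.r2.toFinset := by
      intro x hx
      rw [List.mem_toFinset] at hx ⊢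
      exact hBsub.subset hx
    rw [Finset.inter_eq_right.mpr hBss, List.toFinset_card_of_nodup ndB]
  have hrow2 : (T.r2.filter (fun x => ¬ x ∈ setB T)).length
      = l2 - (setB T).length := by
    have h := List.length_eq_length_filter_add (l := T.r2)
      (fun x => decide (x ∈ setB T))
    have hnegf : (T.r2.filter (fun x => !decide (x ∈ setB T)))
        = T.r2.filter (fun x => ¬ x ∈ setB T) := by
      refine List.filter_congr ?_
      intro x _
      simp
    rw [hnegf, hBmemlen, hlen2] at h
    omega
  have hcollen : (List.insertionSort (· ≤ ·) (setB T)).length = (setB T).length :=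
    List.length_insertionSort _ _
  have hshape : shapeOf (Phi T)
      = [l1 - k, l2 - (setB T).length] ++ List.replicate (setB T).length 1 := by
    rw [shapeOf, Phi]
    simp only [hrow1, hrow2, hcollen]
    rfl
  have hlastA : lastv ∈ setA T ↔ lastv ∈ T.r1 := by
    simp [setA, List.mem_filter, hlastmem]
  by_cases hin : lastv ∈ T.r1
  · -- last entry is repeated: shape is lamShape2
    have hlA : lastv ∈ setA T := hlastA.mpr hin
    have hk1 : 1 ≤ k := by
      rw [if_pos hlA] at hdropc
      omega
    have hBk : (setB T).length = k - 1 := by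
      rw [if_pos hlA] at hdropc
      rw [hBlen]
      omega
    have hsh2 : shapeOf (Phi T) = lamShape2 l1 l2 k := by
      rw [hshape, hBk, lamShape2]
      have : l2 - (k - 1) = l2 - k + 1 := by omega
      rw [this]
    refine ⟨?_, fun _ => hsh2⟩
    constructor
    · intro heq
      exfalso
      rw [hsh2] at heq
      rw [lamShape1, lamShape2] at heq
      have h2nd : l2 - k + 1 = l2 - k := by
        have := List.cons.injEq (l1 - k) ([l2 - k + 1] ++ List.replicate (k - 1) 1)
          (l1 - k) ([l2 - k] ++ List.replicate k 1)
        simp only [List.cons_append, List.nil_append] at heq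
        exact (List.cons.inj (List.cons.inj heq).2).1
      omega
    · intro hnotin
      exact absurd hin hnotin
  · -- last entry occurs once: shape is lamShape1
    have hlA : lastv ∉ setA T := fun h => hin (hlastA.mp h)
    have hBk : (setB T).length = k := by
      rw [if_neg hlA] at hdropc
      rw [hBlen]
      omega
    have hsh1 : shapeOf (Phi T) = lamShape1 l1 l2 k := by
      rw [hshape, hBk, lamShape1]
    exact ⟨⟨fun _ => hin, fun _ => hsh1⟩, fun h => absurd h hin⟩
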